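/- arXiv:nlin/0511012 — 6 statements merged into one kernel-verified Lean document; each statement's English description precedes it below -/
import Mathlib

section
/- For every smooth solution (w,u,v) of the dB system, the form (u² + 2vw + 2w³)/2·dx + u·v·dt is a conservation law; that is, ∂_t((u² + 2vw + 2w³)/2) = ∂_x(u·v) holds identically on ℝ². -/
/-- Partial derivative with respect to the first variable `x`. -/
noncomputable def pdx (f : ℝ → ℝ → ℝ) (x t : ℝ) : ℝ := deriv (fun x' => f x' t) x

/-- Partial derivative with respect to the second variable `t`. -/
noncomputable def pdt (f : ℝ → ℝ → ℝ) (x t : ℝ) : ℝ := deriv (fun t' => f x t') t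

/-- A function of two real variables is smooth. -/
def Smooth2 (f : ℝ → ℝ → ℝ) : Prop := ContDiff ℝ (⊤ : ℕ∞) (Function.uncurry f)

/-- The dispersionless Boussinesq (dB) system:
`w_t = u_x`, `u_t = w·w_x + v_x`, `v_t = −u·w_x − 3w·u_x`. -/
def IsDBSolution (w u v : ℝ → ℝ → ℝ) : Prop :=
  (∀ x t, pdt w x t = pdx u x t) ∧
  (∀ x t, pdt u x t = w x t * pdx w x t + pdx v x t) ∧
  (∀ x t, pdt v x t = -(u x t * pdx w x t) - 3 * w x t * pdx u x t)

/-- A symmetry characteristic of the dB system along the solution `(w,u,v)`: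
a solution of the linearized system. -/
def IsSymmetryChar (w u v φw φu φv : ℝ → ℝ → ℝ) : Prop :=
  (∀ x t, pdt φw x t = pdx φu x t) ∧
  (∀ x t, pdt φu x t = w x t * pdx φw x t + pdx w x t * φw x t + pdx φv x t) ∧
  (∀ x t, pdt φv x t = -(u x t * pdx φw x t) - 3 * pdx u x t * φw x t
      - 3 * w x t * pdx φu x t - pdx w x t * φu x t)

/-- A cosymmetry characteristic of the dB system along the solution `(w,u,v)`:
a solution of the adjoint linearized system. -/
def IsCosymmetryChar (w u _v ψw ψu ψv : ℝ → ℝ → ℝ) : Prop :=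
  (∀ x t, pdt ψw x t = w x t * pdx ψu x t - u x t * pdx ψv x t
      + 2 * pdx u x t * ψv x t) ∧
  (∀ x t, pdt ψu x t = pdx ψw x t - 3 * w x t * pdx ψv x t - 2 * pdx w x t * ψv x t) ∧
  (∀ x t, pdt ψv x t = pdx ψu x t)

private lemma smooth2_diff_t {f : ℝ → ℝ → ℝ} (hf : Smooth2 f) (x t : ℝ) :
    DifferentiableAt ℝ (fun t' => f x t') t := by
  have : DifferentiableAt ℝ (Function.uncurry f) (x, t) :=
    (hf.differentiable (by simp)) (x, t)
  exact this.comp t ((differentiableAt_const x).prodMk differentiableAt_id)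

private lemma smooth2_diff_x {f : ℝ → ℝ → ℝ} (hf : Smooth2 f) (x t : ℝ) :
    DifferentiableAt ℝ (fun x' => f x' t) x := by
  have : DifferentiableAt ℝ (Function.uncurry f) (x, t) :=
    (hf.differentiable (by simp)) (x, t)
  exact this.comp x ((differentiableAt_id (𝕜 := ℝ) (x := x)).prodMk (differentiableAt_const t))

/-- For every smooth solution `(w,u,v)` of the dB system, the form
`(u² + 2vw + 2w³)/2·dx + u·v·dt` is a conservation law:
`∂_t((u² + 2vw + 2w³)/2) = ∂_x(u·v)`. -/
theorem dB_conservation_law_p5 (w u v : ℝ → ℝ → ℝ)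
    (hw : Smooth2 w) (hu : Smooth2 u) (hv : Smooth2 v)
    (hsol : IsDBSolution w u v) :
    ∀ x t : ℝ, pdt (fun x t =>
        ((u x t) ^ 2 + 2 * v x t * w x t + 2 * (w x t) ^ 3) / 2) x t
      = pdx (fun x t => u x t * v x t) x t := by
  intro x t
  obtain ⟨h1, h2, h3⟩ := hsol
  have hwt : HasDerivAt (fun t' => w x t') (pdt w x t) t :=
    (smooth2_diff_t hw x t).hasDerivAt
  have hut : HasDerivAt (fun t' => u x t') (pdt u x t) t :=
    (smooth2_diff_t hu x t).hasDerivAt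
  have hvt : HasDerivAt (fun t' => v x t') (pdt v x t) t :=
    (smooth2_diff_t hv x t).hasDerivAt
  have hux : HasDerivAt (fun x' => u x' t) (pdx u x t) x :=
    (smooth2_diff_x hu x t).hasDerivAt
  have hvx : HasDerivAt (fun x' => v x' t) (pdx v x t) x :=
    (smooth2_diff_x hv x t).hasDerivAt
  have hL : HasDerivAt (fun t' => ((u x t') ^ 2 + 2 * v x t' * w x t' + 2 * (w x t') ^ 3) / 2)
      ((2 * u x t * pdt u x t + (2 * pdt v x t * w x t + 2 * v x t * pdt w x t)
        + 2 * (3 * (w x t) ^ 2 * pdt w x t)) / 2) t := by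
    have := ((((hut.pow 2).add ((hvt.const_mul 2).mul hwt)).add
      ((hwt.pow 3).const_mul 2)).div_const 2)
    refine this.congr_deriv ?_
    norm_num
  have hR : HasDerivAt (fun x' => u x' t * v x' t)
      (pdx u x t * v x t + u x t * pdx v x t) x := hux.mul hvx
  have eL : pdt (fun x t => ((u x t) ^ 2 + 2 * v x t * w x t + 2 * (w x t) ^ 3) / 2) x t
      = (2 * u x t * pdt u x t + (2 * pdt v x t * w x t + 2 * v x t * pdt w x t)
        + 2 * (3 * (w x t) ^ 2 * pdt w x t)) / 2 := hL.deriv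
  have eR : pdx (fun x t => u x t * v x t) x t
      = pdx u x t * v x t + u x t * pdx v x t := hR.deriv
  rw [eL, eR, h1 x t, h2 x t, h3 x t]
  ring
end

section
/- For every smooth solution (w,u,v) of the dB system, the triple φ₃ = (2w_x·w + v_x, −w_x·u − u_x·w, −3w_x·w² − u_x·u − 2v_x·w) is a symmetry characteristic along (w,u,v). -/
open Function

namespace DBaux
variable {f : ℝ → ℝ → ℝ}

lemma sliceX (hf : Smooth2 f) (t : ℝ) : ContDiff ℝ (⊤ : ℕ∞) (fun x => f x t) :=
  hf.comp (contDiff_id.prodMk contDiff_const)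

lemma sliceT (hf : Smooth2 f) (x : ℝ) : ContDiff ℝ (⊤ : ℕ∞) (fun t => f x t) :=
  hf.comp (contDiff_const.prodMk contDiff_id)

lemma hdX (hf : Smooth2 f) (x t : ℝ) : HasDerivAt (fun x' => f x' t) (pdx f x t) x :=
  ((sliceX hf t).differentiable (by simp) x).hasDerivAt

lemma hdT (hf : Smooth2 f) (x t : ℝ) : HasDerivAt (fun t' => f x t') (pdt f x t) t :=
  ((sliceT hf x).differentiable (by simp) t).hasDerivAt

lemma pdx_fd (hf : Smooth2 f) (x t : ℝ) :
    pdx f x t = fderiv ℝ (uncurry f) (x, t) (1, 0) := by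
  have h1 : HasDerivAt (fun x' : ℝ => ((x', t) : ℝ × ℝ)) ((1 : ℝ), (0 : ℝ)) x :=
    (hasDerivAt_id x).prodMk (hasDerivAt_const x t)
  have h2 := ((hf.differentiable (by simp)) (x, t)).hasFDerivAt
  have h3 := (h2.comp_hasDerivAt x h1).deriv
  simp only [Function.comp_def, Function.uncurry_apply_pair] at h3
  rw [pdx]; exact h3

lemma pdt_fd (hf : Smooth2 f) (x t : ℝ) :
    pdt f x t = fderiv ℝ (uncurry f) (x, t) (0, 1) := by
  have h1 : HasDerivAt (fun t' : ℝ => ((x, t') : ℝ × ℝ)) ((0 : ℝ), (1 : ℝ)) t :=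
    (hasDerivAt_const t x).prodMk (hasDerivAt_id t)
  have h2 := ((hf.differentiable (by simp)) (x, t)).hasFDerivAt
  have h3 := (h2.comp_hasDerivAt t h1).deriv
  simp only [Function.comp_def, Function.uncurry_apply_pair] at h3
  rw [pdt]; exact h3

lemma uncurry_pdx (hf : Smooth2 f) :
    uncurry (pdx f) = fun p : ℝ × ℝ => fderiv ℝ (uncurry f) p (1, 0) :=
  funext fun p => pdx_fd hf p.1 p.2

lemma uncurry_pdt (hf : Smooth2 f) :
    uncurry (pdt f) = fun p : ℝ × ℝ => fderiv ℝ (uncurry f) p (0, 1) :=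
  funext fun p => pdt_fd hf p.1 p.2

lemma smooth_pdx (hf : Smooth2 f) : Smooth2 (pdx f) := by
  rw [Smooth2, uncurry_pdx hf]
  exact (hf.fderiv_right (by simp)).clm_apply contDiff_const

lemma smooth_pdt (hf : Smooth2 f) : Smooth2 (pdt f) := by
  rw [Smooth2, uncurry_pdt hf]
  exact (hf.fderiv_right (by simp)).clm_apply contDiff_const

lemma clairaut (hf : Smooth2 f) (x t : ℝ) : pdt (pdx f) x t = pdx (pdt f) x t := by
  have hfd : ContDiff ℝ (⊤ : ℕ∞) (fderiv ℝ (uncurry f)) := hf.fderiv_right (by simp)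
  have e1 : pdt (pdx f) x t = fderiv ℝ (fderiv ℝ (uncurry f)) (x, t) ((0:ℝ), (1:ℝ)) (1, 0) := by
    rw [pdt_fd (smooth_pdx hf) x t, uncurry_pdx hf,
      fderiv_clm_apply (hfd.differentiable (by simp) (x, t)) (differentiableAt_const _)]
    simp
  have e2 : pdx (pdt f) x t = fderiv ℝ (fderiv ℝ (uncurry f)) (x, t) ((1:ℝ), (0:ℝ)) (0, 1) := by
    rw [pdx_fd (smooth_pdt hf) x t, uncurry_pdt hf,
      fderiv_clm_apply (hfd.differentiable (by simp) (x, t)) (differentiableAt_const _)]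
    simp
  rw [e1, e2]
  exact (hf.contDiffAt.isSymmSndFDerivAt (by rw [minSmoothness_of_isRCLikeNormedField]; exact WithTop.coe_le_coe.mpr le_top)) _ _

lemma pdx_congr {f g : ℝ → ℝ → ℝ} (h : ∀ x t, f x t = g x t) (x t : ℝ) :
    pdx f x t = pdx g x t := by
  unfold pdx
  congr 1
  funext x'
  exact h x' t

end DBaux

/-- `φ₃ = (2w_x·w + v_x, −w_x·u − u_x·w, −3w_x·w² − u_x·u − 2v_x·w)`
is a symmetry characteristic along every smooth solution of the dB system. -/
theorem dB_symmetry_phi3 (w u v : ℝ → ℝ → ℝ)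
    (hw : Smooth2 w) (hu : Smooth2 u) (hv : Smooth2 v)
    (hsol : IsDBSolution w u v) :
    IsSymmetryChar w u v
      (fun x t => 2 * pdx w x t * w x t + pdx v x t)
      (fun x t => -(pdx w x t * u x t) - pdx u x t * w x t)
      (fun x t => -(3 * pdx w x t * (w x t) ^ 2) - pdx u x t * u x t
        - 2 * pdx v x t * w x t) := by
  obtain ⟨h1, h2, h3⟩ := hsol
  have hw1 := DBaux.smooth_pdx hw
  have hu1 := DBaux.smooth_pdx hu
  have hv1 := DBaux.smooth_pdx hv
  have cw : ∀ x t, pdt (pdx w) x t = pdx (pdx u) x t := fun x t =>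
    (DBaux.clairaut hw x t).trans (DBaux.pdx_congr h1 x t)
  have cu : ∀ x t, pdt (pdx u) x t
      = pdx w x t * pdx w x t + w x t * pdx (pdx w) x t + pdx (pdx v) x t := by
    intro x t
    have e := (DBaux.clairaut hu x t).trans (DBaux.pdx_congr h2 x t)
    have HA : HasDerivAt (fun x' => w x' t * pdx w x' t + pdx v x' t)
        (pdx w x t * pdx w x t + w x t * pdx (pdx w) x t + pdx (pdx v) x t) x := by
      have h := ((DBaux.hdX hw x t).mul (DBaux.hdX hw1 x t)).add (DBaux.hdX hv1 x t)
      exact h.congr_deriv (by ring)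
    exact e.trans HA.deriv
  have cv : ∀ x t, pdt (pdx v) x t
      = -(pdx u x t * pdx w x t) - u x t * pdx (pdx w) x t
        - 3 * pdx w x t * pdx u x t - 3 * w x t * pdx (pdx u) x t := by
    intro x t
    have e := (DBaux.clairaut hv x t).trans (DBaux.pdx_congr h3 x t)
    have HA : HasDerivAt (fun x' => -(u x' t * pdx w x' t) - 3 * w x' t * pdx u x' t)
        (-(pdx u x t * pdx w x t) - u x t * pdx (pdx w) x t
          - 3 * pdx w x t * pdx u x t - 3 * w x t * pdx (pdx u) x t) x := by
      have h := (((DBaux.hdX hu x t).mul (DBaux.hdX hw1 x t)).neg).sub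
        (((DBaux.hdX hw x t).const_mul (3:ℝ)).mul (DBaux.hdX hu1 x t))
      exact h.congr_deriv (by ring)
    exact e.trans HA.deriv
  refine ⟨fun x t => ?_, fun x t => ?_, fun x t => ?_⟩
  · -- equation 1
    show deriv (fun t' => 2 * pdx w x t' * w x t' + pdx v x t') t
        = deriv (fun x' => -(pdx w x' t * u x' t) - pdx u x' t * w x' t) x
    have HA : HasDerivAt (fun t' => 2 * pdx w x t' * w x t' + pdx v x t')
        (2 * pdt (pdx w) x t * w x t + 2 * pdx w x t * pdt w x t + pdt (pdx v) x t) t := by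
      have h := (((DBaux.hdT hw1 x t).const_mul (2:ℝ)).mul (DBaux.hdT hw x t)).add
        (DBaux.hdT hv1 x t)
      exact h.congr_deriv (by ring)
    have HB : HasDerivAt (fun x' => -(pdx w x' t * u x' t) - pdx u x' t * w x' t)
        (-(pdx (pdx w) x t * u x t + pdx w x t * pdx u x t)
          - (pdx (pdx u) x t * w x t + pdx u x t * pdx w x t)) x := by
      have h := (((DBaux.hdX hw1 x t).mul (DBaux.hdX hu x t)).neg).sub
        ((DBaux.hdX hu1 x t).mul (DBaux.hdX hw x t))
      exact h.congr_deriv (by ring)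
    rw [HA.deriv, HB.deriv, cw x t, cv x t, h1 x t]
    ring
  · -- equation 2
    show deriv (fun t' => -(pdx w x t' * u x t') - pdx u x t' * w x t') t
        = w x t * deriv (fun x' => 2 * pdx w x' t * w x' t + pdx v x' t) x
          + pdx w x t * (2 * pdx w x t * w x t + pdx v x t)
          + deriv (fun x' => -(3 * pdx w x' t * (w x' t) ^ 2) - pdx u x' t * u x' t
              - 2 * pdx v x' t * w x' t) x
    have HA : HasDerivAt (fun t' => -(pdx w x t' * u x t') - pdx u x t' * w x t')
        (-(pdt (pdx w) x t * u x t + pdx w x t * pdt u x t)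
          - (pdt (pdx u) x t * w x t + pdx u x t * pdt w x t)) t := by
      have h := (((DBaux.hdT hw1 x t).mul (DBaux.hdT hu x t)).neg).sub
        ((DBaux.hdT hu1 x t).mul (DBaux.hdT hw x t))
      exact h.congr_deriv (by ring)
    have HBw : HasDerivAt (fun x' => 2 * pdx w x' t * w x' t + pdx v x' t)
        (2 * pdx (pdx w) x t * w x t + 2 * pdx w x t * pdx w x t + pdx (pdx v) x t) x := by
      have h := (((DBaux.hdX hw1 x t).const_mul (2:ℝ)).mul (DBaux.hdX hw x t)).add
        (DBaux.hdX hv1 x t)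
      exact h.congr_deriv (by ring)
    have HBv : HasDerivAt (fun x' => -(3 * pdx w x' t * (w x' t) ^ 2) - pdx u x' t * u x' t
          - 2 * pdx v x' t * w x' t)
        (-(3 * pdx (pdx w) x t * (w x t) ^ 2 + 3 * pdx w x t * (2 * w x t * pdx w x t))
          - (pdx (pdx u) x t * u x t + pdx u x t * pdx u x t)
          - (2 * pdx (pdx v) x t * w x t + 2 * pdx v x t * pdx w x t)) x := by
      have h := (((((DBaux.hdX hw1 x t).const_mul (3:ℝ)).mul
          ((DBaux.hdX hw x t).pow 2)).neg).sub
          ((DBaux.hdX hu1 x t).mul (DBaux.hdX hu x t))).sub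
          (((DBaux.hdX hv1 x t).const_mul (2:ℝ)).mul (DBaux.hdX hw x t))
      exact h.congr_deriv (by simp only [Pi.pow_apply]; ring)
    rw [HA.deriv, HBw.deriv, HBv.deriv, cw x t, cu x t, h1 x t, h2 x t]
    ring
  · -- equation 3
    show deriv (fun t' => -(3 * pdx w x t' * (w x t') ^ 2) - pdx u x t' * u x t'
            - 2 * pdx v x t' * w x t') t
        = -(u x t * deriv (fun x' => 2 * pdx w x' t * w x' t + pdx v x' t) x)
          - 3 * pdx u x t * (2 * pdx w x t * w x t + pdx v x t)
          - 3 * w x t * deriv (fun x' => -(pdx w x' t * u x' t) - pdx u x' t * w x' t) x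
          - pdx w x t * (-(pdx w x t * u x t) - pdx u x t * w x t)
    have HA : HasDerivAt (fun t' => -(3 * pdx w x t' * (w x t') ^ 2) - pdx u x t' * u x t'
          - 2 * pdx v x t' * w x t')
        (-(3 * pdt (pdx w) x t * (w x t) ^ 2 + 3 * pdx w x t * (2 * w x t * pdt w x t))
          - (pdt (pdx u) x t * u x t + pdx u x t * pdt u x t)
          - (2 * pdt (pdx v) x t * w x t + 2 * pdx v x t * pdt w x t)) t := by
      have h := (((((DBaux.hdT hw1 x t).const_mul (3:ℝ)).mul
          ((DBaux.hdT hw x t).pow 2)).neg).sub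
          ((DBaux.hdT hu1 x t).mul (DBaux.hdT hu x t))).sub
          (((DBaux.hdT hv1 x t).const_mul (2:ℝ)).mul (DBaux.hdT hw x t))
      exact h.congr_deriv (by simp only [Pi.pow_apply]; ring)
    have HBw : HasDerivAt (fun x' => 2 * pdx w x' t * w x' t + pdx v x' t)
        (2 * pdx (pdx w) x t * w x t + 2 * pdx w x t * pdx w x t + pdx (pdx v) x t) x := by
      have h := (((DBaux.hdX hw1 x t).const_mul (2:ℝ)).mul (DBaux.hdX hw x t)).add
        (DBaux.hdX hv1 x t)
      exact h.congr_deriv (by ring)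
    have HBu : HasDerivAt (fun x' => -(pdx w x' t * u x' t) - pdx u x' t * w x' t)
        (-(pdx (pdx w) x t * u x t + pdx w x t * pdx u x t)
          - (pdx (pdx u) x t * w x t + pdx u x t * pdx w x t)) x := by
      have h := (((DBaux.hdX hw1 x t).mul (DBaux.hdX hu x t)).neg).sub
        ((DBaux.hdX hu1 x t).mul (DBaux.hdX hw x t))
      exact h.congr_deriv (by ring)
    rw [HA.deriv, HBw.deriv, HBu.deriv, cw x t, cu x t, cv x t, h1 x t, h2 x t]
    ring
end

section
/- For every smooth solution (w,u,v) of the dB system, the triple φ̄₀,₂ = (t·u_x + 2w, t·(w_x·w + v_x) + 3u, −t·(w_x·u + 3u_x·w) + 4v) is a symmetry characteristic along (w,u,v). -/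
open Function

variable {f g : ℝ → ℝ → ℝ}

lemma Smooth2.hasDerivAt_x (hf : Smooth2 f) (x t : ℝ) :
    HasDerivAt (fun x' => f x' t) (fderiv ℝ (uncurry f) (x, t) (1, 0)) x := by
  have h := (hf.differentiable (by simp) (x, t)).hasFDerivAt
  have h2 : HasDerivAt (fun x' : ℝ => (x', t)) ((1:ℝ), (0:ℝ)) x :=
    HasDerivAt.prodMk (hasDerivAt_id x) (hasDerivAt_const x t)
  exact h.comp_hasDerivAt x h2

lemma Smooth2.hasDerivAt_t (hf : Smooth2 f) (x t : ℝ) :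
    HasDerivAt (fun t' => f x t') (fderiv ℝ (uncurry f) (x, t) (0, 1)) t := by
  have h := (hf.differentiable (by simp) (x, t)).hasFDerivAt
  have h2 : HasDerivAt (fun t' : ℝ => (x, t')) ((0:ℝ), (1:ℝ)) t :=
    HasDerivAt.prodMk (hasDerivAt_const t x) (hasDerivAt_id t)
  exact h.comp_hasDerivAt t h2

lemma pdx_eq (hf : Smooth2 f) (x t : ℝ) :
    pdx f x t = fderiv ℝ (uncurry f) (x, t) (1, 0) := (hf.hasDerivAt_x x t).deriv

lemma pdt_eq (hf : Smooth2 f) (x t : ℝ) :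
    pdt f x t = fderiv ℝ (uncurry f) (x, t) (0, 1) := (hf.hasDerivAt_t x t).deriv

lemma Smooth2.diffx (hf : Smooth2 f) (x t : ℝ) :
    DifferentiableAt ℝ (fun x' => f x' t) x := (hf.hasDerivAt_x x t).differentiableAt

lemma Smooth2.difft (hf : Smooth2 f) (x t : ℝ) :
    DifferentiableAt ℝ (fun t' => f x t') t := (hf.hasDerivAt_t x t).differentiableAt

lemma Smooth2.pdx (hf : Smooth2 f) : Smooth2 (pdx f) := by
  have h : ContDiff ℝ (⊤ : ℕ∞) (fun p : ℝ × ℝ => fderiv ℝ (uncurry f) p ((1:ℝ), (0:ℝ))) :=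
    (hf.fderiv_right (by simp)).clm_apply contDiff_const
  have he : uncurry (_root_.pdx f) = fun p : ℝ × ℝ => fderiv ℝ (uncurry f) p ((1:ℝ), (0:ℝ)) := by
    funext p
    exact pdx_eq hf p.1 p.2
  rw [Smooth2, he]; exact h

lemma Smooth2.pdt (hf : Smooth2 f) : Smooth2 (pdt f) := by
  have h : ContDiff ℝ (⊤ : ℕ∞) (fun p : ℝ × ℝ => fderiv ℝ (uncurry f) p ((0:ℝ), (1:ℝ))) :=
    (hf.fderiv_right (by simp)).clm_apply contDiff_const
  have he : uncurry (_root_.pdt f) = fun p : ℝ × ℝ => fderiv ℝ (uncurry f) p ((0:ℝ), (1:ℝ)) := by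
    funext p
    exact pdt_eq hf p.1 p.2
  rw [Smooth2, he]; exact h

lemma pdt_pdx_comm (hf : Smooth2 f) (x t : ℝ) : pdt (pdx f) x t = pdx (pdt f) x t := by
  have hd : DifferentiableAt ℝ (fderiv ℝ (uncurry f)) (x, t) :=
    ((hf.fderiv_right (m := 1) (WithTop.coe_le_coe.mpr le_top)).differentiable (by simp)) (x, t)
  have key : ∀ a b : ℝ × ℝ,
      fderiv ℝ (fun p : ℝ × ℝ => fderiv ℝ (uncurry f) p a) (x, t) b
        = fderiv ℝ (fderiv ℝ (uncurry f)) (x, t) b a := by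
    intro a b
    rw [fderiv_clm_apply hd (differentiableAt_const a)]
    simp
  have hsymm : IsSymmSndFDerivAt ℝ (uncurry f) (x, t) :=
    hf.contDiffAt.isSymmSndFDerivAt (by rw [minSmoothness_of_isRCLikeNormedField]; exact WithTop.coe_le_coe.mpr le_top)
  have h1 : pdt (pdx f) x t
      = fderiv ℝ (fun p : ℝ × ℝ => fderiv ℝ (uncurry f) p ((1:ℝ),(0:ℝ))) (x, t) ((0:ℝ),(1:ℝ)) := by
    rw [pdt_eq hf.pdx x t]
    have hfun : uncurry (_root_.pdx f) = fun p : ℝ × ℝ => fderiv ℝ (uncurry f) p ((1:ℝ),(0:ℝ)) :=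
      funext fun p => pdx_eq hf p.1 p.2
    rw [hfun]
  have h2 : pdx (pdt f) x t
      = fderiv ℝ (fun p : ℝ × ℝ => fderiv ℝ (uncurry f) p ((0:ℝ),(1:ℝ))) (x, t) ((1:ℝ),(0:ℝ)) := by
    rw [pdx_eq hf.pdt x t]
    have hfun : uncurry (_root_.pdt f) = fun p : ℝ × ℝ => fderiv ℝ (uncurry f) p ((0:ℝ),(1:ℝ)) :=
      funext fun p => pdt_eq hf p.1 p.2
    rw [hfun]
  rw [h1, h2, key, key]
  exact hsymm _ _
section Algebra

variable {f g : ℝ → ℝ → ℝ}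

lemma Smooth2.add (hf : Smooth2 f) (hg : Smooth2 g) :
    Smooth2 (fun x t => f x t + g x t) := ContDiff.add hf hg

lemma Smooth2.mul (hf : Smooth2 f) (hg : Smooth2 g) :
    Smooth2 (fun x t => f x t * g x t) := ContDiff.mul hf hg

lemma Smooth2.neg (hf : Smooth2 f) : Smooth2 (fun x t => -(f x t)) := ContDiff.neg hf

lemma Smooth2.cmul (hf : Smooth2 f) (c : ℝ) :
    Smooth2 (fun x t => c * f x t) := ContDiff.mul contDiff_const hf

lemma Smooth2.tmul (hf : Smooth2 f) : Smooth2 (fun x t => t * f x t) :=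
  ContDiff.mul contDiff_snd hf

lemma pdx_add (hf : Smooth2 f) (hg : Smooth2 g) (x t : ℝ) :
    pdx (fun x t => f x t + g x t) x t = pdx f x t + pdx g x t :=
  deriv_add (hf.diffx x t) (hg.diffx x t)

lemma pdt_add (hf : Smooth2 f) (hg : Smooth2 g) (x t : ℝ) :
    pdt (fun x t => f x t + g x t) x t = pdt f x t + pdt g x t :=
  deriv_add (hf.difft x t) (hg.difft x t)

lemma pdx_sub (hf : Smooth2 f) (hg : Smooth2 g) (x t : ℝ) :
    pdx (fun x t => f x t - g x t) x t = pdx f x t - pdx g x t :=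
  deriv_sub (hf.diffx x t) (hg.diffx x t)

lemma pdx_mul (hf : Smooth2 f) (hg : Smooth2 g) (x t : ℝ) :
    pdx (fun x t => f x t * g x t) x t = pdx f x t * g x t + f x t * pdx g x t :=
  deriv_mul (hf.diffx x t) (hg.diffx x t)

lemma pdt_mul (hf : Smooth2 f) (hg : Smooth2 g) (x t : ℝ) :
    pdt (fun x t => f x t * g x t) x t = pdt f x t * g x t + f x t * pdt g x t :=
  deriv_mul (hf.difft x t) (hg.difft x t)

lemma pdx_neg (x t : ℝ) :
    pdx (fun x t => -(f x t)) x t = -(pdx f x t) := deriv.neg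

lemma pdt_neg (x t : ℝ) :
    pdt (fun x t => -(f x t)) x t = -(pdt f x t) := deriv.neg

lemma pdx_cmul (hf : Smooth2 f) (c : ℝ) (x t : ℝ) :
    pdx (fun x t => c * f x t) x t = c * pdx f x t :=
  deriv_const_mul c (hf.diffx x t)

lemma pdt_cmul (hf : Smooth2 f) (c : ℝ) (x t : ℝ) :
    pdt (fun x t => c * f x t) x t = c * pdt f x t :=
  deriv_const_mul c (hf.difft x t)

lemma pdx_tmul (hf : Smooth2 f) (x t : ℝ) :
    pdx (fun x t => t * f x t) x t = t * pdx f x t :=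
  deriv_const_mul t (hf.diffx x t)

lemma pdt_tmul (hf : Smooth2 f) (x t : ℝ) :
    pdt (fun x t => t * f x t) x t = f x t + t * pdt f x t := by
  have h := ((hasDerivAt_id t).mul (hf.hasDerivAt_t x t)).deriv
  simp only [Pi.mul_def, id] at h
  rw [pdt, h, one_mul, ← pdt_eq hf]

lemma pdx_congr (h : ∀ x t, f x t = g x t) (x t : ℝ) : pdx f x t = pdx g x t := by
  unfold pdx; congr 1; funext x'; exact h x' t

end Algebra

/-- the triple `φ̄₀,₂ = (t·u_x + 2w, t·(w_x·w + v_x) + 3u,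
−t·(w_x·u + 3u_x·w) + 4v)` is a symmetry characteristic along every smooth
solution of the dB system. -/
theorem dB_symmetry_t_scaling (w u v : ℝ → ℝ → ℝ)
    (hw : Smooth2 w) (hu : Smooth2 u) (hv : Smooth2 v)
    (hsol : IsDBSolution w u v) :
    IsSymmetryChar w u v
      (fun x t => t * pdx u x t + 2 * w x t)
      (fun x t => t * (pdx w x t * w x t + pdx v x t) + 3 * u x t)
      (fun x t => -(t * (pdx w x t * u x t + 3 * pdx u x t * w x t))
        + 4 * v x t) := by
  obtain ⟨hw1, hu1, hv1⟩ := hsol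
  have swx : Smooth2 (pdx w) := hw.pdx
  have sux : Smooth2 (pdx u) := hu.pdx
  have svx : Smooth2 (pdx v) := hv.pdx
  have sg1 : Smooth2 (fun x t => pdx w x t * w x t + pdx v x t) := (swx.mul hw).add svx
  have s3uw : Smooth2 (fun x t => 3 * pdx u x t * w x t) := (sux.cmul 3).mul hw
  have sg2 : Smooth2 (fun x t => pdx w x t * u x t + 3 * pdx u x t * w x t) :=
    (swx.mul hu).add s3uw
  have snwx : Smooth2 (fun x t => -(u x t * pdx w x t)) := (hu.mul swx).neg
  have s3wu : Smooth2 (fun x t => 3 * w x t * pdx u x t) := (hw.cmul 3).mul sux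
  have hWx : ∀ x t, pdt (pdx w) x t = pdx (pdx u) x t := fun x t =>
    (pdt_pdx_comm hw x t).trans (pdx_congr hw1 x t)
  have hUx : ∀ x t, pdt (pdx u) x t
      = (pdx w x t * pdx w x t + w x t * pdx (pdx w) x t) + pdx (pdx v) x t := fun x t => by
    rw [pdt_pdx_comm hu x t, pdx_congr hu1 x t]
    simp only [pdx_add (hw.mul swx) svx, pdx_mul hw swx]
  have hVx : ∀ x t, pdt (pdx v) x t
      = -(pdx u x t * pdx w x t + u x t * pdx (pdx w) x t)
        - ((3 * pdx w x t) * pdx u x t + 3 * w x t * pdx (pdx u) x t) := fun x t => by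
    rw [pdt_pdx_comm hv x t, pdx_congr hv1 x t]
    simp only [pdx_sub snwx s3wu, pdx_neg, pdx_mul hu swx, pdx_mul (hw.cmul 3) sux,
      pdx_cmul hw 3]
  refine ⟨fun x t => ?_, fun x t => ?_, fun x t => ?_⟩
  · simp only [pdt_add sux.tmul (hw.cmul 2), pdt_tmul sux, pdt_cmul hw 2,
      pdx_add sg1.tmul (hu.cmul 3), pdx_tmul sg1, pdx_cmul hu 3,
      pdx_add (swx.mul hw) svx, pdx_mul swx hw, hw1, hUx]
    ring
  · simp only [pdt_add sg1.tmul (hu.cmul 3), pdt_tmul sg1, pdt_cmul hu 3,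
      pdt_add (swx.mul hw) svx, pdt_mul swx hw,
      pdx_add sux.tmul (hw.cmul 2), pdx_tmul sux, pdx_cmul hw 2,
      pdx_add sg2.tmul.neg (hv.cmul 4), pdx_neg, pdx_tmul sg2, pdx_cmul hv 4,
      pdx_add (swx.mul hu) s3uw, pdx_mul swx hu, pdx_mul (sux.cmul 3) hw, pdx_cmul sux 3,
      hw1, hu1, hWx, hVx]
    ring
  · simp only [pdt_add sg2.tmul.neg (hv.cmul 4), pdt_neg, pdt_tmul sg2, pdt_cmul hv 4,
      pdt_add (swx.mul hu) s3uw, pdt_mul swx hu, pdt_mul (sux.cmul 3) hw, pdt_cmul sux 3,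
      pdx_add sux.tmul (hw.cmul 2), pdx_tmul sux, pdx_cmul hw 2,
      pdx_add sg1.tmul (hu.cmul 3), pdx_tmul sg1, pdx_cmul hu 3,
      pdx_add (swx.mul hw) svx, pdx_mul swx hw,
      hw1, hu1, hv1, hWx, hUx]
    ring
end

section
/- For every smooth solution (w,u,v) of the dB system, the triple ψ₆ = (v + 3w², u, w) is a cosymmetry characteristic along (w,u,v). -/

lemma Smooth2.diff_x {f : ℝ → ℝ → ℝ} (hf : Smooth2 f) (t : ℝ) :
    Differentiable ℝ (fun x' => f x' t) := by
  have : (fun x' => f x' t) = Function.uncurry f ∘ (fun x' => (x', t)) := rfl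
  rw [this]
  exact (hf.differentiable (by simp)).comp (differentiable_id.prodMk (differentiable_const t))

lemma Smooth2.diff_t {f : ℝ → ℝ → ℝ} (hf : Smooth2 f) (x : ℝ) :
    Differentiable ℝ (fun t' => f x t') := by
  have : (fun t' => f x t') = Function.uncurry f ∘ (fun t' => (x, t')) := rfl
  rw [this]
  exact (hf.differentiable (by simp)).comp ((differentiable_const x).prodMk differentiable_id)

/-- `ψ₆ = (v + 3w², u, w)` is a cosymmetry characteristic along
every smooth solution of the dB system. -/
theorem dB_cosymmetry_psi6 (w u v : ℝ → ℝ → ℝ)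
    (hw : Smooth2 w) (hu : Smooth2 u) (hv : Smooth2 v)
    (hsol : IsDBSolution w u v) :
    IsCosymmetryChar w u v
      (fun x t => v x t + 3 * (w x t) ^ 2)
      (fun x t => u x t)
      (fun x t => w x t) := by
  obtain ⟨h1, h2, h3⟩ := hsol
  refine ⟨fun x t => ?_, fun x t => ?_, fun x t => ?_⟩
  · have ht : pdt (fun x t => v x t + 3 * (w x t) ^ 2) x t
        = pdt v x t + 6 * w x t * pdt w x t := by
      unfold pdt
      rw [deriv_fun_add (f := fun t' => v x t') (g := fun t' => 3 * w x t' ^ 2) ((hv.diff_t x).differentiableAt)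
        (((hw.diff_t x).differentiableAt.pow 2).const_mul 3),
        deriv_const_mul (d := fun t' => w x t' ^ 2) _ ((hw.diff_t x).differentiableAt.pow 2),
        deriv_fun_pow (hw.diff_t x).differentiableAt 2]
      ring
    rw [ht, h3, h1]
    unfold pdx
    ring
  · rw [h2]
    have hx : pdx (fun x t => v x t + 3 * (w x t) ^ 2) x t
        = pdx v x t + 6 * w x t * pdx w x t := by
      unfold pdx
      rw [deriv_fun_add (f := fun x' => v x' t) (g := fun x' => 3 * w x' t ^ 2) ((hv.diff_x t).differentiableAt)
        (((hw.diff_x t).differentiableAt.pow 2).const_mul 3),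
        deriv_const_mul (d := fun x' => w x' t ^ 2) _ ((hw.diff_x t).differentiableAt.pow 2),
        deriv_fun_pow (hw.diff_x t).differentiableAt 2]
      ring
    show w x t * pdx w x t + pdx v x t = _
    rw [hx]
    show _ = _ - 3 * w x t * pdx w x t - 2 * pdx w x t * w x t
    ring
  · exact h1 x t
end

section
/- For every smooth solution (w,u,v) of the dB system, the triple ψ₇ = (u·w, (2v + w²)/2, u) is a cosymmetry characteristic along (w,u,v). -/
/-- `ψ₇ = (u·w, (2v + w²)/2, u)` is a cosymmetry characteristic along
every smooth solution of the dB system. -/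
theorem dB_cosymmetry_psi7 (w u v : ℝ → ℝ → ℝ)
    (hw : Smooth2 w) (hu : Smooth2 u) (hv : Smooth2 v)
    (hsol : IsDBSolution w u v) :
    IsCosymmetryChar w u v
      (fun x t => u x t * w x t)
      (fun x t => (2 * v x t + (w x t) ^ 2) / 2)
      (fun x t => u x t) := by
  have dX : ∀ (f : ℝ → ℝ → ℝ), Smooth2 f → ∀ t, Differentiable ℝ (fun x' => f x' t) := by
    intro f hf t
    exact (hf.differentiable (by simp)).comp
      (differentiable_id.prodMk (differentiable_const t))
  have dT : ∀ (f : ℝ → ℝ → ℝ), Smooth2 f → ∀ x, Differentiable ℝ (fun t' => f x t') := by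
    intro f hf x
    exact (hf.differentiable (by simp)).comp
      ((differentiable_const x).prodMk differentiable_id)
  obtain ⟨h1, h2, h3⟩ := hsol
  refine ⟨?_, ?_, ?_⟩
  · intro x t
    have : pdt (fun x t => u x t * w x t) x t = pdt u x t * w x t + u x t * pdt w x t := by
      simp only [pdt]
      rw [deriv_fun_mul ((dT u hu x) t) ((dT w hw x) t)]
    rw [this, h2, h1]
    have hx : pdx (fun x t => (2 * v x t + (w x t) ^ 2) / 2) x t = pdx v x t + w x t * pdx w x t := by
      simp only [pdx]
      have : (fun x' => (2 * v x' t + (w x' t) ^ 2) / 2)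
          = fun x' => (2 * v x' t + (w x' t) ^ 2) / 2 := rfl
      rw [deriv_div_const, deriv_fun_add ((dX v hv t).const_mul 2 x)
        (((dX w hw t) x).fun_pow 2), deriv_const_mul 2 ((dX v hv t) x), (((dX w hw t) x).hasDerivAt.fun_pow 2).deriv]
      push_cast
      ring
    have hxv : pdx (fun x t => u x t) x t = pdx u x t := rfl
    rw [hx, hxv]
    ring
  · intro x t
    have ht : pdt (fun x t => (2 * v x t + (w x t) ^ 2) / 2) x t
        = pdt v x t + w x t * pdt w x t := by
      simp only [pdt]
      rw [deriv_div_const, deriv_fun_add ((dT v hv x).const_mul 2 t)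
        (((dT w hw x) t).fun_pow 2), deriv_const_mul 2 ((dT v hv x) t), (((dT w hw x) t).hasDerivAt.fun_pow 2).deriv]
      push_cast
      ring
    have hxw : pdx (fun x t => u x t * w x t) x t = pdx u x t * w x t + u x t * pdx w x t := by
      simp only [pdx]
      rw [deriv_fun_mul ((dX u hu t) x) ((dX w hw t) x)]
    rw [ht, hxw, h3, h1]
    ring
  · intro x t
    have ht : pdt (fun x t => u x t) x t = pdt u x t := rfl
    have hx : pdx (fun x t => (2 * v x t + (w x t) ^ 2) / 2) x t
        = pdx v x t + w x t * pdx w x t := by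
      simp only [pdx]
      rw [deriv_div_const, deriv_fun_add ((dX v hv t).const_mul 2 x)
        (((dX w hw t) x).fun_pow 2), deriv_const_mul 2 ((dX v hv t) x), (((dX w hw t) x).hasDerivAt.fun_pow 2).deriv]
      push_cast
      ring
    rw [ht, hx, h2]
    ring
end

section
/- For every smooth solution (w,u,v) of the dB system, the triple ψ₈ = ((−3u² + 12vw + 14w³)/14, −(3/7)·u·w, (3/7)·(v + w²)) is a cosymmetry characteristic along (w,u,v). -/
private lemma hdx {f : ℝ → ℝ → ℝ} (hf : Smooth2 f) (x t : ℝ) :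
    HasDerivAt (fun x' => f x' t) (pdx f x t) x := by
  have h : DifferentiableAt ℝ (fun x' => f x' t) x :=
    ((hf.differentiable (by simp)).comp
      (differentiable_id.prodMk (differentiable_const t))).differentiableAt
  simpa [pdx] using h.hasDerivAt

private lemma hdt {f : ℝ → ℝ → ℝ} (hf : Smooth2 f) (x t : ℝ) :
    HasDerivAt (fun t' => f x t') (pdt f x t) t := by
  have h : DifferentiableAt ℝ (fun t' => f x t') t :=
    ((hf.differentiable (by simp)).comp
      ((differentiable_const x).prodMk differentiable_id)).differentiableAt
  simpa [pdt] using h.hasDerivAt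

/-- `ψ₈ = ((−3u² + 12vw + 14w³)/14, −(3/7)·u·w, (3/7)·(v + w²))`
is a cosymmetry characteristic along every smooth solution of the dB system. -/
theorem dB_cosymmetry_psi8 (w u v : ℝ → ℝ → ℝ)
    (hw : Smooth2 w) (hu : Smooth2 u) (hv : Smooth2 v)
    (hsol : IsDBSolution w u v) :
    IsCosymmetryChar w u v
      (fun x t => (-3 * (u x t) ^ 2 + 12 * v x t * w x t + 14 * (w x t) ^ 3) / 14)
      (fun x t => -(3 / 7) * (u x t * w x t))
      (fun x t => (3 / 7) * (v x t + (w x t) ^ 2)) := by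
  obtain ⟨h1, h2, h3⟩ := hsol
  refine ⟨?_, ?_, ?_⟩ <;> intro x t <;>
  · have Hwx := hdx hw x t
    have Hux := hdx hu x t
    have Hvx := hdx hv x t
    have Hwt := hdt hw x t
    have Hut := hdt hu x t
    have Hvt := hdt hv x t
    have Hpsiw_t : HasDerivAt
        (fun t' => (-3 * u x t' ^ 2 + 12 * v x t' * w x t' + 14 * w x t' ^ 3) / 14)
        ((-3 * ((2 : ℕ) * u x t ^ (2 - 1) * pdt u x t)
          + (12 * pdt v x t * w x t + 12 * v x t * pdt w x t)
          + 14 * ((3 : ℕ) * w x t ^ (3 - 1) * pdt w x t)) / 14) t :=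
      ((((Hut.pow 2).const_mul (-3)).add
        ((Hvt.const_mul 12).mul Hwt)).add ((Hwt.pow 3).const_mul 14)).div_const 14
    have Hpsiw_x : HasDerivAt
        (fun x' => (-3 * u x' t ^ 2 + 12 * v x' t * w x' t + 14 * w x' t ^ 3) / 14)
        ((-3 * ((2 : ℕ) * u x t ^ (2 - 1) * pdx u x t)
          + (12 * pdx v x t * w x t + 12 * v x t * pdx w x t)
          + 14 * ((3 : ℕ) * w x t ^ (3 - 1) * pdx w x t)) / 14) x :=
      ((((Hux.pow 2).const_mul (-3)).add
        ((Hvx.const_mul 12).mul Hwx)).add ((Hwx.pow 3).const_mul 14)).div_const 14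
    have Hpsiu_t : HasDerivAt (fun t' => -(3 / 7) * (u x t' * w x t'))
        (-(3 / 7) * (pdt u x t * w x t + u x t * pdt w x t)) t :=
      (Hut.mul Hwt).const_mul (-(3 / 7))
    have Hpsiu_x : HasDerivAt (fun x' => -(3 / 7) * (u x' t * w x' t))
        (-(3 / 7) * (pdx u x t * w x t + u x t * pdx w x t)) x :=
      (Hux.mul Hwx).const_mul (-(3 / 7))
    have Hpsiv_t : HasDerivAt (fun t' => 3 / 7 * (v x t' + w x t' ^ 2))
        (3 / 7 * (pdt v x t + (2 : ℕ) * w x t ^ (2 - 1) * pdt w x t)) t :=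
      (Hvt.add (Hwt.pow 2)).const_mul (3 / 7)
    have Hpsiv_x : HasDerivAt (fun x' => 3 / 7 * (v x' t + w x' t ^ 2))
        (3 / 7 * (pdx v x t + (2 : ℕ) * w x t ^ (2 - 1) * pdx w x t)) x :=
      (Hvx.add (Hwx.pow 2)).const_mul (3 / 7)
    simp only [pdt, pdx]
    simp only [Hpsiw_t.deriv, Hpsiw_x.deriv, Hpsiu_t.deriv, Hpsiu_x.deriv,
      Hpsiv_t.deriv, Hpsiv_x.deriv, Hwx.deriv, Hux.deriv, Hvx.deriv,
      Hwt.deriv, Hut.deriv, Hvt.deriv]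
    simp only [h1, h2, h3]
    push_cast
    ring
end
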